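/- In the shuffle algebra Λ of doubly skew-symmetric rational functions, for all r, s in Z the identity x^{r+1} ⋆ y^s + v (y^s ⋆ x^{r+1}) = -v (x^r ⋆ y^{s+1}) - y^{s+1} ⋆ x^r holds; explicitly, both sides equal (v^{-1} - v) x^{r+1} y^{s+1} / (x - y). -/
import Mathlib


open MvPolynomial
set_option synthInstance.maxHeartbeats 1000000
set_option maxHeartbeats 4000000

/-- The field ℂ(v) of rational functions. -/
noncomputable abbrev Kv : Type := RatFunc ℂ

/-- The field of rational functions in the two variables `x, y` over ℂ(v). -/
noncomputable abbrev F2 : Type := FractionRing (MvPolynomial (Fin 2) Kv)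

noncomputable def xx : F2 := algebraMap (MvPolynomial (Fin 2) Kv) F2 (X 0)
noncomputable def yy : F2 := algebraMap (MvPolynomial (Fin 2) Kv) F2 (X 1)
noncomputable def vv : F2 := algebraMap (MvPolynomial (Fin 2) Kv) F2 (C RatFunc.X)

/-- The shuffle product `x^r ⋆ y^s` of `x^r ∈ Λ_{1,0}` and `y^s ∈ Λ_{0,1}`. -/
noncomputable def starXY (r s : ℤ) : F2 := xx ^ r * yy ^ s * ((xx + vv⁻¹ * yy) / (xx - yy))

/-- The shuffle product `y^s ⋆ x^r` of `y^s ∈ Λ_{0,1}` and `x^r ∈ Λ_{1,0}`. -/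
noncomputable def starYX (s r : ℤ) : F2 := yy ^ s * xx ^ r * ((yy + vv⁻¹ * xx) / (yy - xx))

lemma xx_ne_zero : xx ≠ 0 := by
  simp [xx, IsFractionRing.to_map_eq_zero_iff, MvPolynomial.X_ne_zero]

lemma yy_ne_zero : yy ≠ 0 := by
  simp [yy, IsFractionRing.to_map_eq_zero_iff, MvPolynomial.X_ne_zero]

lemma vv_ne_zero : vv ≠ 0 := by
  simp [vv, IsFractionRing.to_map_eq_zero_iff, RatFunc.X_ne_zero]

lemma xx_ne_yy : xx - yy ≠ 0 := by
  rw [sub_ne_zero]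
  intro h
  have := IsFractionRing.injective (MvPolynomial (Fin 2) Kv) F2 h
  exact (MvPolynomial.X_injective.ne (by decide : (0 : Fin 2) ≠ 1)) this

/-- in the shuffle algebra `Λ`, for all `r, s ∈ ℤ`:
`x^{r+1} ⋆ y^s + v (y^s ⋆ x^{r+1}) = -v (x^r ⋆ y^{s+1}) - y^{s+1} ⋆ x^r`, and
both sides equal `(v⁻¹ - v) x^{r+1} y^{s+1}/(x - y)`. -/
theorem stmt11 (r s : ℤ) :
    starXY (r + 1) s + vv * starYX s (r + 1) =
      (vv⁻¹ - vv) * xx ^ (r + 1) * yy ^ (s + 1) / (xx - yy) ∧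
    -(vv * starXY r (s + 1)) - starYX (s + 1) r =
      (vv⁻¹ - vv) * xx ^ (r + 1) * yy ^ (s + 1) / (xx - yy) := by
  have hx := xx_ne_zero
  have hy := yy_ne_zero
  have hv := vv_ne_zero
  have hxy := xx_ne_yy
  have hyx : yy - xx ≠ 0 := by rw [sub_ne_zero] at hxy ⊢; exact fun h => hxy h.symm
  constructor <;>
  · unfold starXY starYX
    rw [zpow_add_one₀ hx, zpow_add_one₀ hy]
    field_simp
    ring
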